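/- arXiv:2301.13654 — 2 statements merged into one kernel-verified Lean document; each statement's English description precedes it below -/
import Mathlib

section
/- Let Ω be finite, g : Ω^n → [0,1] monotone increasing in each block, and for each ground element (i,a) of a finite set G = N × A let F_{i,a} ∈ Δ(Ω). For S ⊆ G define the per-agent mixture F_{i,S} as the distribution of the sum (over elements (i,a) ∈ S) of independent samples shifted appropriately, and define f(S) = E[g(ω)] where ω_i ~ F_{i,S} independently. If g is DR-submodular, then f is a monotone submodular set function: for all S ⊆ S' ⊆ G and (i,a) ∉ S', f(S ∪ {(i,a)}) − f(S) ≥ f(S' ∪ {(i,a)}) − f(S'). -/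
/-!
Write `eᵢ(b)` for the vector with `b` in block `i` and zeros elsewhere. Adding the elements of
`T` one at a time, `f(S ∪ T) = E_v[E_ω[g(ω + v)]]` for disjoint `S, T`, where `ω` is the aggregate
draw of `S` and `v ≥ 0` that of `T`. So `f` is monotone because `g` is, and the marginal gain of
`p = (i,a)` at `T` is `E_b E_ω[g(ω + eᵢ(b)) - g(ω)]` with `b ~ F i a`. For `S ⊆ S'`, passing
from `S` to `S'` replaces `ω` by `ω + v` inside this expectation, which can only decrease the
integrand by DR-submodularity.
-/

open Classical in
/-- The expected reward `f(S) = E[g(ω)]`, where the `i`-th block of `ω` is the sum of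
independent draws from `F i a` over all `a` with `(i,a) ∈ S` (each draw supported on
`Ω`, empty sum `= 0`), and draws are independent across ground elements. -/
noncomputable def expReward {N A : Type*} [Fintype N] [Fintype A]
    [DecidableEq N] [DecidableEq A] {q : ℕ}
    (Ω : Finset (Fin q → ℝ)) (F : N → A → (Fin q → ℝ) → ℝ)
    (g : (N → Fin q → ℝ) → ℝ) (S : Finset (N × A)) : ℝ :=
  ∑ φ ∈ S.pi (fun _ => Ω),
    (∏ p ∈ S.attach, F p.1.1 p.1.2 (φ p.1 p.2)) *
      g (fun i j => ∑ a : A, if h : (i, a) ∈ S then φ (i, a) h j else 0)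

open Finset

theorem Finset.sum_pi_insert {α : Type*} {β : α → Type*} [DecidableEq α]
    [∀ a, DecidableEq (β a)] {M : Type*} [AddCommMonoid M]
    {s : Finset α} {t : ∀ a, Finset (β a)} {a : α} (ha : a ∉ s)
    (f : (∀ i ∈ insert a s, β i) → M) :
    ∑ φ ∈ (insert a s).pi t, f φ = ∑ b ∈ t a, ∑ ψ ∈ s.pi t, f (Pi.cons s a b ψ) := by
  have hdisj : ∀ x ∈ t a, ∀ y ∈ t a, x ≠ y →
      Disjoint ((s.pi t).image (Pi.cons s a x)) ((s.pi t).image (Pi.cons s a y)) := by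
    intro x _ y _ hxy
    simp only [disjoint_iff_ne, mem_image]
    rintro _ ⟨ψ, _, rfl⟩ _ ⟨χ, _, rfl⟩ heq
    have := congr_fun₂ heq a (mem_insert_self a s)
    rw [Pi.cons_same, Pi.cons_same] at this
    exact hxy this
  rw [pi_insert ha, sum_biUnion hdisj]
  exact sum_congr rfl fun b _ => sum_image fun ψ _ χ _ heq => Pi.cons_injective ha heq

theorem Finset.prod_attach_insert_pi_cons {α : Type*} {β : α → Type*} [DecidableEq α]
    {M : Type*} [CommMonoid M] {s : Finset α} {a : α} (ha : a ∉ s)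
    (f : ∀ a, β a → M) (b : β a) (φ : ∀ i ∈ s, β i) :
    ∏ r ∈ (insert a s).attach, f r (Pi.cons s a b φ r.1 r.2)
      = f a b * ∏ r ∈ s.attach, f r (φ r.1 r.2) := by
  rw [attach_insert, prod_insert, prod_image]
  · rw [Pi.cons_same]
    congr 1
    refine prod_congr rfl fun r _ => ?_
    rw [Pi.cons_ne fun h : a = r => ha (h ▸ r.2)]
  · exact fun _ _ _ _ => Subtype.ext ∘ Subtype.mk.inj
  · simpa only [mem_image, mem_attach, Subtype.mk.injEq, true_and,
      Subtype.exists, exists_prop, exists_eq_right] using ha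

section ExpReward

variable {N A : Type*} [Fintype A] [DecidableEq N] [DecidableEq A] {q : ℕ}
  {Ω : Finset (Fin q → ℝ)} {F : N → A → (Fin q → ℝ) → ℝ}

def blockSum (S : Finset (N × A)) (φ : ∀ p ∈ S, Fin q → ℝ) : N → Fin q → ℝ :=
  fun i j => ∑ a : A, if h : (i, a) ∈ S then φ (i, a) h j else 0

theorem blockSum_nonneg (hΩnn : ∀ x ∈ Ω, 0 ≤ x) {S : Finset (N × A)}
    {φ : ∀ p ∈ S, Fin q → ℝ} (hφ : φ ∈ S.pi fun _ => Ω) : 0 ≤ blockSum S φ :=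
  fun i j => sum_nonneg fun a _ => by
    split
    · next h => exact hΩnn _ (mem_pi.mp hφ _ h) j
    · exact le_rfl

theorem blockSum_empty (φ : ∀ p ∈ (∅ : Finset (N × A)), Fin q → ℝ) : blockSum ∅ φ = 0 := by
  funext i j
  simp [blockSum]

theorem blockSum_pi_cons {p : N × A} {S : Finset (N × A)} (hp : p ∉ S)
    (b : Fin q → ℝ) (φ : ∀ r ∈ S, Fin q → ℝ) :
    blockSum (insert p S) (Pi.cons S p b φ) = blockSum S φ + Pi.single p.1 b := by
  funext i j
  have hsummand : ∀ a : A,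
      (if h : (i, a) ∈ insert p S then Pi.cons S p b φ (i, a) h j else 0)
        = (if h : (i, a) ∈ S then φ (i, a) h j else 0) + (if (i, a) = p then b j else 0) := by
    intro a
    by_cases hip : (i, a) = p
    · subst hip
      simp [hp]
    · by_cases hS : (i, a) ∈ S
      · simp [hip, hS, Pi.cons_ne (Ne.symm hip)]
      · simp [hip, hS]
  simp only [blockSum, Pi.add_apply, sum_congr rfl fun a _ => hsummand a, sum_add_distrib,
    Pi.single_apply]
  congr 1
  obtain ⟨i', a'⟩ := p
  by_cases hi : i = i' <;> simp [hi]

variable [Fintype N]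

theorem expReward_eq_sum (g : (N → Fin q → ℝ) → ℝ) (S : Finset (N × A)) :
    expReward Ω F g S = ∑ φ ∈ S.pi fun _ => Ω,
      (∏ p ∈ S.attach, F p.1.1 p.1.2 (φ p.1 p.2)) * g (blockSum S φ) := rfl

theorem expReward_empty (g : (N → Fin q → ℝ) → ℝ) : expReward Ω F g ∅ = g 0 := by
  simp [expReward_eq_sum, blockSum_empty]

theorem expReward_insert {p : N × A} {S : Finset (N × A)} (hp : p ∉ S)
    (g : (N → Fin q → ℝ) → ℝ) :
    expReward Ω F g (insert p S)
      = ∑ b ∈ Ω, F p.1 p.2 b * expReward Ω F (fun ω => g (ω + Pi.single p.1 b)) S := by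
  rw [expReward_eq_sum, sum_pi_insert hp]
  refine sum_congr rfl fun b _ => ?_
  rw [expReward_eq_sum, mul_sum]
  refine sum_congr rfl fun φ _ => ?_
  rw [prod_attach_insert_pi_cons hp (fun r => F r.1 r.2), blockSum_pi_cons hp, mul_assoc]

theorem expReward_const (hF1 : ∀ i a, ∑ x ∈ Ω, F i a x = 1) (S : Finset (N × A)) (c : ℝ) :
    expReward Ω F (fun _ => c) S = c := by
  induction S using Finset.induction_on with
  | empty => exact expReward_empty _
  | insert p S hp ih => rw [expReward_insert hp]; simp only [ih, ← sum_mul, hF1, one_mul]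

theorem expReward_le_expReward (hΩnn : ∀ x ∈ Ω, 0 ≤ x) (hF0 : ∀ i a x, 0 ≤ F i a x)
    {S : Finset (N × A)} {g₁ g₂ : (N → Fin q → ℝ) → ℝ}
    (hg : ∀ ω, 0 ≤ ω → g₁ ω ≤ g₂ ω) : expReward Ω F g₁ S ≤ expReward Ω F g₂ S :=
  sum_le_sum fun _ hφ => mul_le_mul_of_nonneg_left (hg _ (blockSum_nonneg hΩnn hφ))
    (prod_nonneg fun _ _ => hF0 _ _ _)

theorem expReward_sub (S : Finset (N × A)) (g₁ g₂ : (N → Fin q → ℝ) → ℝ) :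
    expReward Ω F (fun ω => g₁ ω - g₂ ω) S = expReward Ω F g₁ S - expReward Ω F g₂ S := by
  simp only [expReward_eq_sum, ← sum_sub_distrib, mul_sub]

theorem expReward_union {S T : Finset (N × A)} (hST : Disjoint S T)
    (g : (N → Fin q → ℝ) → ℝ) :
    expReward Ω F g (S ∪ T) = expReward Ω F (fun v => expReward Ω F (fun ω => g (ω + v)) S) T := by
  induction T using Finset.induction_on generalizing g with
  | empty => simp [expReward_empty]
  | insert p T hp ih =>
    have hpS : p ∉ S := fun h => disjoint_left.mp hST h (mem_insert_self p T)
    have hpST : p ∉ S ∪ T := by simp [hpS, hp]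
    rw [union_insert, expReward_insert hpST, expReward_insert hp]
    refine sum_congr rfl fun b _ => ?_
    simp only [ih (hST.mono_right (subset_insert p T)), add_assoc]

theorem expReward_eq_of_subset {S S' : Finset (N × A)} (hSS' : S ⊆ S')
    (g : (N → Fin q → ℝ) → ℝ) :
    expReward Ω F g S'
      = expReward Ω F (fun v => expReward Ω F (fun ω => g (ω + v)) S) (S' \ S) := by
  rw [← expReward_union disjoint_sdiff, union_sdiff_of_subset hSS']

theorem expReward_le_of_subset (hΩnn : ∀ x ∈ Ω, 0 ≤ x) (hF0 : ∀ i a x, 0 ≤ F i a x)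
    (hF1 : ∀ i a, ∑ x ∈ Ω, F i a x = 1) {S S' : Finset (N × A)} (hSS' : S ⊆ S')
    {g : (N → Fin q → ℝ) → ℝ} (hg : ∀ ω v, 0 ≤ ω → 0 ≤ v → g ω ≤ g (ω + v)) :
    expReward Ω F g S ≤ expReward Ω F g S' := by
  rw [expReward_eq_of_subset hSS', ← expReward_const hF1 (S' \ S) (expReward Ω F g S)]
  exact expReward_le_expReward hΩnn hF0 fun v hv =>
    expReward_le_expReward hΩnn hF0 fun ω hω => hg ω v hω hv

theorem expReward_le_of_superset (hΩnn : ∀ x ∈ Ω, 0 ≤ x) (hF0 : ∀ i a x, 0 ≤ F i a x)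
    (hF1 : ∀ i a, ∑ x ∈ Ω, F i a x = 1) {S S' : Finset (N × A)} (hSS' : S ⊆ S')
    {g : (N → Fin q → ℝ) → ℝ} (hg : ∀ ω v, 0 ≤ ω → 0 ≤ v → g (ω + v) ≤ g ω) :
    expReward Ω F g S' ≤ expReward Ω F g S := by
  rw [expReward_eq_of_subset hSS', ← expReward_const hF1 (S' \ S) (expReward Ω F g S)]
  exact expReward_le_expReward hΩnn hF0 fun v hv =>
    expReward_le_expReward hΩnn hF0 fun ω hω => hg ω v hω hv

theorem expReward_insert_sub (hF1 : ∀ i a, ∑ x ∈ Ω, F i a x = 1) {p : N × A}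
    {T : Finset (N × A)} (hp : p ∉ T) (g : (N → Fin q → ℝ) → ℝ) :
    expReward Ω F g (insert p T) - expReward Ω F g T
      = ∑ b ∈ Ω, F p.1 p.2 b * expReward Ω F (fun ω => g (ω + Pi.single p.1 b) - g ω) T := by
  conv_lhs => rw [expReward_insert hp, ← one_mul (expReward Ω F g T), ← hF1 p.1 p.2, sum_mul,
    ← sum_sub_distrib]
  simp only [expReward_sub, mul_sub]

end ExpReward

theorem stmt11_general {N A : Type*} [Fintype N] [Fintype A] [DecidableEq N] [DecidableEq A]
    {q : ℕ} (Ω : Finset (Fin q → ℝ))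
    (hΩnn : ∀ x ∈ Ω, 0 ≤ x)
    (F : N → A → (Fin q → ℝ) → ℝ)
    (hF0 : ∀ i a x, 0 ≤ F i a x) (hF1 : ∀ i a, ∑ x ∈ Ω, F i a x = 1)
    (g : (N → Fin q → ℝ) → ℝ)
    (hmono : ∀ x y : N → Fin q → ℝ, 0 ≤ x → x ≤ y → g x ≤ g y)
    (hDR : ∀ x y z : N → Fin q → ℝ, 0 ≤ x → x ≤ y → 0 ≤ z →
      g (x + z) - g x ≥ g (y + z) - g y) :
    (∀ S S' : Finset (N × A), S ⊆ S' → expReward Ω F g S ≤ expReward Ω F g S') ∧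
    (∀ S S' : Finset (N × A), ∀ p : N × A, S ⊆ S' → p ∉ S' →
      expReward Ω F g (insert p S') - expReward Ω F g S' ≤
        expReward Ω F g (insert p S) - expReward Ω F g S) := by
  refine ⟨fun S S' hSS' => ?_, fun S S' p hSS' hpS' => ?_⟩
  · exact expReward_le_of_subset hΩnn hF0 hF1 hSS' fun ω v hω hv =>
      hmono ω (ω + v) hω (le_add_of_nonneg_right hv)
  · rw [expReward_insert_sub hF1 hpS', expReward_insert_sub hF1 fun hpS => hpS' (hSS' hpS)]
    refine sum_le_sum fun b hb => mul_le_mul_of_nonneg_left ?_ (hF0 _ _ _)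
    have hsingle : 0 ≤ Pi.single (M := fun _ : N => Fin q → ℝ) p.1 b :=
      Pi.single_nonneg.mpr (hΩnn b hb)
    exact expReward_le_of_superset hΩnn hF0 hF1 hSS' fun ω v hω hv =>
      hDR ω (ω + v) _ hω (le_add_of_nonneg_right hv) hsingle

/-- If `g` is monotone increasing, `[0,1]`-valued on nonnegative vectors, and
DR-submodular, then the expected reward `S ↦ expReward Ω F g S` is a monotone
submodular set function on subsets of `N × A`. -/
theorem stmt11 {N A : Type*} [Fintype N] [Fintype A] [DecidableEq N] [DecidableEq A]
    {q : ℕ} (Ω : Finset (Fin q → ℝ))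
    (hΩ0 : (0 : Fin q → ℝ) ∈ Ω) (hΩnn : ∀ x ∈ Ω, 0 ≤ x)
    (F : N → A → (Fin q → ℝ) → ℝ)
    (hF0 : ∀ i a x, 0 ≤ F i a x) (hF1 : ∀ i a, ∑ x ∈ Ω, F i a x = 1)
    (g : (N → Fin q → ℝ) → ℝ)
    (hg01 : ∀ x : N → Fin q → ℝ, 0 ≤ x → g x ∈ Set.Icc (0:ℝ) 1)
    (hmono : ∀ x y : N → Fin q → ℝ, 0 ≤ x → x ≤ y → g x ≤ g y)
    (hDR : ∀ x y z : N → Fin q → ℝ, 0 ≤ x → x ≤ y → 0 ≤ z →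
      g (x + z) - g x ≥ g (y + z) - g y) :
    (∀ S S' : Finset (N × A), S ⊆ S' → expReward Ω F g S ≤ expReward Ω F g S') ∧
    (∀ S S' : Finset (N × A), ∀ p : N × A, S ⊆ S' → p ∉ S' →
      expReward Ω F g (insert p S') - expReward Ω F g S' ≤
        expReward Ω F g (insert p S) - expReward Ω F g S) :=
  stmt11_general Ω hΩnn F hF0 hF1 g hmono hDR
end

section
/- Given a feasible solution to the relaxed LP with marginal-consistency inequalities Σ_{a: a_i=a} t_{θ,a} ≤ ξ_{i,θ,a} (Σ_a ξ_{i,θ,a} = 1 for each agent, t ≥ 0, ξ ≥ 0), one can construct new values t' ≥ t with Σ_{a ∈ A^n : a_i = a} t'_{θ,a} = ξ_{i,θ,a} for all agents i and actions a; equivalently, any sub-probability joint distribution with marginals dominated by given per-agent probability distributions can be completed to a joint probability distribution with exactly those marginals. -/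
/-- Any sub-probability joint distribution whose marginals are dominated by given
per-agent probability distributions can be completed (pointwise increased) to a joint
probability distribution with exactly those marginals. -/
theorem stmt16 {N : Type*} [Fintype N] [DecidableEq N] [Nonempty N]
    {A : N → Type*} [∀ i, Fintype (A i)] [∀ i, DecidableEq (A i)]
    (ξ : ∀ i, A i → ℝ) (hξ0 : ∀ i b, 0 ≤ ξ i b) (hξ1 : ∀ i, ∑ b, ξ i b = 1)
    (t : (∀ i, A i) → ℝ) (ht0 : ∀ a, 0 ≤ t a)
    (hmarg : ∀ i (b : A i), (∑ a : ∀ j, A j, if a i = b then t a else 0) ≤ ξ i b) :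
    ∃ t' : (∀ i, A i) → ℝ,
      (∀ a, t a ≤ t' a) ∧ (∀ a, 0 ≤ t' a) ∧ (∑ a, t' a = 1) ∧
      ∀ i (b : A i), (∑ a : ∀ j, A j, if a i = b then t' a else 0) = ξ i b := by
  classical
  set S : ∀ i, A i → ℝ := fun i b => ∑ a : ∀ j, A j, if a i = b then t a else 0 with hS
  set δ : ∀ i, A i → ℝ := fun i b => ξ i b - S i b with hδ
  have hδ0 : ∀ i b, 0 ≤ δ i b := fun i b => sub_nonneg.2 (hmarg i b)
  have hSsum : ∀ i, ∑ b, S i b = ∑ a, t a := by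
    intro i
    rw [hS]
    rw [Finset.sum_comm]
    refine Finset.sum_congr rfl fun a _ => ?_
    simp
  set ι : ℝ := 1 - ∑ a, t a with hι
  have hδsum : ∀ i, ∑ b, δ i b = ι := by
    intro i
    simp only [hδ, Finset.sum_sub_distrib, hξ1 i, hSsum i, hι]
  have hι0 : 0 ≤ ι := by
    obtain ⟨i⟩ := ‹Nonempty N›
    have := hδsum i
    have h2 : 0 ≤ ∑ b, δ i b := Finset.sum_nonneg fun b _ => hδ0 i b
    linarith
  set n := Fintype.card N with hn
  have hn1 : 1 ≤ n := Fintype.card_pos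
  by_cases hι0' : ι = 0
  · have hδz : ∀ i b, δ i b = 0 := by
      intro i b
      have := (Finset.sum_eq_zero_iff_of_nonneg (fun b _ => hδ0 i b)).1
        ((hδsum i).trans hι0')
      exact this b (Finset.mem_univ b)
    refine ⟨t, fun a => le_rfl, ht0, by linarith [hι], fun i b => ?_⟩
    have := hδz i b
    simp only [hδ, hS] at this ⊢
    linarith
  · have hιpos : 0 < ι := lt_of_le_of_ne hι0 (Ne.symm hι0')
    set c : ℝ := ι ^ (n - 1) with hc
    have hcpos : 0 < c := pow_pos hιpos _
    set p : (∀ j, A j) → ℝ := fun a => ∏ j, δ j (a j) with hp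
    have hp0 : ∀ a, 0 ≤ p a := fun a => Finset.prod_nonneg fun j _ => hδ0 j (a j)
    have hpsum : ∑ a, p a = ι ^ n := by
      rw [hp, ← Fintype.prod_sum]
      rw [Finset.prod_congr rfl fun j _ => hδsum j, Finset.prod_const]
      simp [hn]
    have hpmarg : ∀ i (b : A i), (∑ a : ∀ j, A j, if a i = b then p a else 0)
        = δ i b * c := by
      intro i b
      set g : ∀ j, A j → ℝ := fun j x =>
        if h : j = i then (if (h ▸ x : A i) = b then δ j x else 0) else δ j x with hg
      have key : ∀ a : ∀ j, A j, (if a i = b then p a else 0) = ∏ j, g j (a j) := by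
        intro a
        by_cases hab : a i = b
        · rw [if_pos hab, hp]
          refine Finset.prod_congr rfl fun j _ => ?_
          by_cases hj : j = i
          · subst hj
            simp [hg, hab]
          · simp [hg, hj]
        · rw [if_neg hab]
          refine (Finset.prod_eq_zero (Finset.mem_univ i) ?_).symm
          simp [hg, hab]
      rw [Finset.sum_congr rfl fun a _ => key a, ← Fintype.prod_sum]
      have hgi : ∑ x, g i x = δ i b := by
        simp only [hg, dif_pos rfl]
        simp
      have hgj : ∀ j, j ≠ i → ∑ x, g j x = ι := by
        intro j hj
        simp only [hg, dif_neg hj]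
        exact hδsum j
      rw [← Finset.mul_prod_erase Finset.univ (fun j => ∑ x, g j x) (Finset.mem_univ i),
        hgi]
      congr 1
      rw [Finset.prod_congr rfl fun j hj => hgj j (Finset.ne_of_mem_erase hj),
        Finset.prod_const, Finset.card_erase_of_mem (Finset.mem_univ i)]
      simp [hc, hn]
    have hpc : ∀ a, 0 ≤ p a / c := fun a => div_nonneg (hp0 a) hcpos.le
    refine ⟨fun a => t a + p a / c, fun a => le_add_of_nonneg_right (hpc a),
      fun a => add_nonneg (ht0 a) (hpc a), ?_, ?_⟩
    · rw [Finset.sum_add_distrib, ← Finset.sum_div, hpsum]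
      have : ι ^ n = c * ι := by
        rw [hc, ← pow_succ]
        congr 1
        omega
      rw [this, mul_comm, mul_div_assoc, div_self (ne_of_gt hcpos), mul_one]
      simp [hι]
    · intro i b
      have hsplit : ∀ a : ∀ j, A j, (if a i = b then t a + p a / c else 0)
          = (if a i = b then t a else 0) + (if a i = b then p a / c else 0) := by
        intro a; split <;> simp
      rw [Finset.sum_congr rfl fun a _ => hsplit a, Finset.sum_add_distrib]
      have : (∑ a : ∀ j, A j, if a i = b then p a / c else 0)
          = (∑ a : ∀ j, A j, if a i = b then p a else 0) / c := by
        rw [Finset.sum_div]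
        refine Finset.sum_congr rfl fun a _ => ?_
        split <;> simp
      rw [this, hpmarg i b, mul_div_assoc, div_self (ne_of_gt hcpos), mul_one]
      simp only [hδ]
      rw [hS]
      ring
end
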